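/- arXiv:2306.08511 — 6 statements merged into one kernel-verified Lean document; each statement's English description precedes it below -/
import Mathlib

section
/- There exists a profile P on 4 issues that is rank-unanimous on some issue b, yet the 0-divisiveness of b under the normalized Copeland score is nonzero; concretely, for the profile with rankings a≻b≻c≻d, c≻b≻a≻d, d≻b≻a≻c (one agent each), issue b has rank 2 for all agents but Div_0^Cop(b, P) = 1/3. -/
open Finset

/-- The sub-population of agents preferring issue `a` to issue `b`
(ranking `p i : I ≃ Fin m` gives 0-based positions, lower = more preferred). -/
def subpop {I A : Type*} [Fintype A] {m : ℕ}
    (p : A → I ≃ Fin m) (a b : I) : Finset A :=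
  Finset.univ.filter fun i => p i a < p i b

/-- Restriction of a profile to a sub-population, as a multiset of rankings. -/
def restr {I A : Type*} {m : ℕ} (p : A → I ≃ Fin m) (X : Finset A) :
    Multiset (I ≃ Fin m) :=
  X.val.map p

/-- Normalised Borda score of issue `a` in a (sub)profile `Q` over `m` issues. -/
noncomputable def bordaM {I : Type*} {m : ℕ}
    (Q : Multiset (I ≃ Fin m)) (a : I) : ℝ :=
  (Q.map fun r => (m : ℝ) - 1 - ((r a : ℕ) : ℝ)).sum /
    ((Multiset.card Q : ℝ) * ((m : ℝ) - 1))

/-- Normalised Copeland score of issue `a` in a (sub)profile `Q` over `m` issues. -/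
noncomputable def copM {I : Type*} [Fintype I] [DecidableEq I] {m : ℕ}
    (Q : Multiset (I ≃ Fin m)) (a : I) : ℝ :=
  ((Finset.univ.filter fun b =>
      b ≠ a ∧ Q.countP (fun r => r b < r a) < Q.countP (fun r => r a < r b)).card : ℝ) /
    ((m : ℝ) - 1)

/-- α-divisiveness of issue `a` w.r.t. scoring function `s`, normalising constant `ℓ`.
A summand is `0` whenever one of the two sub-populations is empty. -/
noncomputable def alphaDiv {I A : Type*} [Fintype I] [DecidableEq I] [Fintype A]
    {m : ℕ} (p : A → I ≃ Fin m) (s : Multiset (I ≃ Fin m) → I → ℝ)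
    (α ℓ : ℝ) (a : I) : ℝ :=
  (1 / ((m : ℝ) - 1)) *
    ∑ b ∈ Finset.univ.erase a,
      if 0 < (subpop p a b).card ∧ 0 < (subpop p b a).card then
        (ℓ * ((subpop p a b).card : ℝ) * ((subpop p b a).card : ℝ) /
            ((Fintype.card A : ℝ)) ^ 2) ^ α *
          |s (restr p (subpop p a b)) a - s (restr p (subpop p b a)) a|
      else 0

/-- Ranking a ≻ b ≻ c ≻ d (issues named 0=a, 1=b, 2=c, 3=d). -/
def rnk1 : Fin 4 ≃ Fin 4 := Equiv.refl _

/-- Ranking c ≻ b ≻ a ≻ d. -/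
def rnk2 : Fin 4 ≃ Fin 4 := Equiv.swap 0 2

/-- Ranking d ≻ b ≻ a ≻ c. -/
def rnk3 : Fin 4 ≃ Fin 4 := (Equiv.swap 2 3).trans (Equiv.swap 0 2)

/-- The 3-agent profile of Proposition 1. -/
def pex2 : Fin 3 → (Fin 4 ≃ Fin 4) := ![rnk1, rnk2, rnk3]

/-! Each issue `x ≠ b` is ranked first by exactly one agent, and that agent alone prefers `x`
to `b`. In that single-agent subprofile `b` beats the two issues ranked below it, so its Copeland
score is `2/3`. Among the other two agents `b` beats `x` unanimously but only ties with the two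
remaining issues, which these agents rank on opposite sides of `b`; there its score is `1/3`.
So every summand of `Div₀` is `1/3`, and `Div₀(b) = (1/3) · 3 · (1/3)`. -/

section Divisiveness

variable {I A : Type*} [Fintype I] [DecidableEq I] [Fintype A] {m : ℕ}

theorem alphaDiv_zero (p : A → I ≃ Fin m) (s : Multiset (I ≃ Fin m) → I → ℝ) (ℓ : ℝ) (a : I) :
    alphaDiv p s 0 ℓ a = (1 / ((m : ℝ) - 1)) *
      ∑ b ∈ univ.erase a,
        if 0 < (subpop p a b).card ∧ 0 < (subpop p b a).card then
          |s (restr p (subpop p a b)) a - s (restr p (subpop p b a)) a|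
        else 0 := by
  simp only [alphaDiv, Real.rpow_zero, one_mul]

def copelandWins (Q : Multiset (I ≃ Fin m)) (a : I) : ℕ :=
  #{b | b ≠ a ∧ Q.countP (fun r => r b < r a) < Q.countP (fun r => r a < r b)}

theorem copM_eq_copelandWins_div (Q : Multiset (I ≃ Fin m)) (a : I) :
    copM Q a = (copelandWins Q a : ℝ) / ((m : ℝ) - 1) :=
  rfl

end Divisiveness

theorem subpop_pex2_card :
    ∀ x : Fin 4, x ≠ 1 → (subpop pex2 x 1).card = 1 ∧ (subpop pex2 1 x).card = 2 := by
  decide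

theorem copelandWins_pex2 :
    ∀ x : Fin 4, x ≠ 1 →
      copelandWins (restr pex2 (subpop pex2 x 1)) 1 = 2 ∧
        copelandWins (restr pex2 (subpop pex2 1 x)) 1 = 1 := by
  decide

/-- the profile a b c d / c b a d / d b a c is rank-unanimous on issue
`b` (= issue `1`, ranked second, i.e. 0-based position 1, by every agent), yet the
0-divisiveness of `b` under the normalised Copeland score is `1/3 ≠ 0`. -/
theorem stmt2 :
    (∀ i : Fin 3, pex2 i 1 = 1) ∧
    alphaDiv pex2 copM 0 4 (1 : Fin 4) = 1 / 3 := by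
  refine ⟨by decide, ?_⟩
  have summand_eq : ∀ x ∈ univ.erase (1 : Fin 4),
      (if 0 < (subpop pex2 1 x).card ∧ 0 < (subpop pex2 x 1).card then
        |copM (restr pex2 (subpop pex2 1 x)) 1 - copM (restr pex2 (subpop pex2 x 1)) 1|
      else 0) = 1 / 3 := by
    intro x hx
    have hx1 : x ≠ 1 := ne_of_mem_erase hx
    obtain ⟨above, below⟩ := subpop_pex2_card x hx1
    obtain ⟨winsAbove, winsBelow⟩ := copelandWins_pex2 x hx1
    rw [above, below, copM_eq_copelandWins_div, copM_eq_copelandWins_div, winsAbove, winsBelow]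
    norm_num [abs_of_nonpos]
  rw [alphaDiv_zero, sum_congr rfl summand_eq, sum_const, card_erase_of_mem (mem_univ _)]
  norm_num
end

section
/- Let P be a fully polarised profile with an even number n of agents: half the agents share ranking ≻_1 and half share ranking ≻_2, where ≻_2 is the reverse of ≻_1. Let a be the top-ranked issue of ≻_1. Then with normalization constant ℓ = 4, Div_α^Borda(a, P) = 1 for every α ∈ [0,1]. -/
open Finset

/-! In a polarised profile every other issue `b` splits the agents into the two halves, so each
summand of the divisiveness has weight `4 k² / (2k)² = 1`, and the Borda score of `a` is `1` on
the half that ranks it first and `0` on the half that ranks it last; the average of the `m - 1`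
summands is therefore `1`. -/

section TwoRankings

variable {I A : Type*} [Fintype A] {m : ℕ} {p : A → I ≃ Fin m} {r₁ r₂ : I ≃ Fin m}
  {q : A → Prop} [DecidablePred q]

theorem subpop_eq_filter_of_ite (hp : ∀ i, p i = if q i then r₁ else r₂) {a b : I}
    (h₁ : r₁ a < r₁ b) (h₂ : r₂ b < r₂ a) : subpop p a b = univ.filter q := by
  ext i
  by_cases hi : q i <;> simp [subpop, hp i, hi, h₁, h₂.le]

theorem subpop_eq_filter_not_of_ite (hp : ∀ i, p i = if q i then r₁ else r₂) {a b : I}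
    (h₁ : r₁ a < r₁ b) (h₂ : r₂ b < r₂ a) : subpop p b a = univ.filter (¬ q ·) := by
  ext i
  by_cases hi : q i <;> simp [subpop, hp i, hi, h₁.le, h₂]

end TwoRankings

theorem lt_of_reverse_of_top {I : Type*} {m : ℕ} {r₁ r₂ : I ≃ Fin m}
    (hrev : ∀ x, (r₂ x : ℕ) = m - 1 - (r₁ x : ℕ)) {a b : I} (ha : (r₁ a : ℕ) = 0)
    (hba : b ≠ a) : r₁ a < r₁ b ∧ r₂ b < r₂ a := by
  have hb : (r₁ b : ℕ) ≠ 0 := fun h => hba (r₁.injective (Fin.ext (h.trans ha.symm)))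
  have := (r₁ b).isLt
  simp only [Fin.lt_def, hrev, ha]
  omega

theorem restr_eq_replicate {I A : Type*} {m : ℕ} {p : A → I ≃ Fin m} {X : Finset A}
    {r : I ≃ Fin m} (h : ∀ i ∈ X, p i = r) : restr p X = Multiset.replicate #X r := by
  rw [restr, Multiset.eq_replicate, Multiset.card_map]
  refine ⟨rfl, fun r' hr' => ?_⟩
  obtain ⟨i, hi, rfl⟩ := Multiset.mem_map.mp hr'
  exact h i hi

theorem bordaM_replicate {I : Type*} {m n : ℕ} (hn : n ≠ 0) (r : I ≃ Fin m) (a : I) :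
    bordaM (Multiset.replicate n r) a = ((m : ℝ) - 1 - (r a : ℕ)) / ((m : ℝ) - 1) := by
  have hn' : (n : ℝ) ≠ 0 := Nat.cast_ne_zero.mpr hn
  rw [bordaM, Multiset.map_replicate, Multiset.sum_replicate, Multiset.card_replicate,
    nsmul_eq_mul, mul_div_mul_left _ _ hn']

theorem card_filter_val_lt_two_mul (k : ℕ) :
    #(univ.filter fun i : Fin (2 * k) => (i : ℕ) < k) = k := by
  rw [Fin.card_filter_val_lt]
  omega

theorem card_filter_not_val_lt_two_mul (k : ℕ) :
    #(univ.filter fun i : Fin (2 * k) => ¬ (i : ℕ) < k) = k := by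
  have := card_filter_add_card_filter_not (s := (univ : Finset (Fin (2 * k))))
    (fun i => (i : ℕ) < k)
  rw [card_filter_val_lt_two_mul, card_univ, Fintype.card_fin] at this
  omega

theorem alphaDiv_eq_one_of_forall {I A : Type*} [Fintype I] [DecidableEq I] [Fintype A]
    {m : ℕ} {p : A → I ≃ Fin m} {s : Multiset (I ≃ Fin m) → I → ℝ} {α ℓ : ℝ} {a : I}
    (hm : 2 ≤ m) (hcard : Fintype.card I = m)
    (hweight : ∀ b ≠ a,
      ℓ * (#(subpop p a b) : ℝ) * (#(subpop p b a) : ℝ) / (Fintype.card A : ℝ) ^ 2 = 1)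
    (hgap : ∀ b ≠ a, |s (restr p (subpop p a b)) a - s (restr p (subpop p b a)) a| = 1) :
    alphaDiv p s α ℓ a = 1 := by
  have hsummand : ∀ b ∈ univ.erase a,
      (if 0 < #(subpop p a b) ∧ 0 < #(subpop p b a) then
        (ℓ * (#(subpop p a b) : ℝ) * (#(subpop p b a) : ℝ) / (Fintype.card A : ℝ) ^ 2) ^ α *
          |s (restr p (subpop p a b)) a - s (restr p (subpop p b a)) a|
      else 0) = 1 := by
    intro b hb
    have hba := ne_of_mem_erase hb
    -- an empty side would make the weight `0`
    have hpos : 0 < #(subpop p a b) ∧ 0 < #(subpop p b a) := by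
      by_contra h
      rw [not_and_or, not_lt, not_lt, Nat.le_zero, Nat.le_zero] at h
      have := hweight b hba
      rcases h with h | h <;> simp [h] at this
    rw [if_pos hpos, hweight b hba, Real.one_rpow, hgap b hba, mul_one]
  have hm' : (m : ℝ) - 1 ≠ 0 := by
    have : (2 : ℝ) ≤ m := by exact_mod_cast hm
    linarith
  rw [alphaDiv, sum_congr rfl hsummand, sum_const, card_erase_of_mem (mem_univ a), card_univ,
    hcard, nsmul_one, Nat.cast_pred (by omega), one_div_mul_cancel hm']

theorem stmt4_general {I : Type*} [Fintype I] [DecidableEq I] {m k : ℕ}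
    (hm : 2 ≤ m) (hcard : Fintype.card I = m) (hk : 1 ≤ k)
    (r1 r2 : I ≃ Fin m)
    (hrev : ∀ x : I, (r2 x : ℕ) = m - 1 - (r1 x : ℕ))
    (p : Fin (2 * k) → I ≃ Fin m)
    (hp : ∀ i : Fin (2 * k), p i = if (i : ℕ) < k then r1 else r2)
    (a : I) (ha : (r1 a : ℕ) = 0)
    (α : ℝ) :
    alphaDiv p bordaM α 4 a = 1 := by
  have hm' : (m : ℝ) - 1 ≠ 0 := by
    have : (2 : ℝ) ≤ m := by exact_mod_cast hm
    linarith
  have hr2a : (r2 a : ℕ) = m - 1 := by rw [hrev, ha, Nat.sub_zero]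
  have hsplit : ∀ b ≠ a, subpop p a b = univ.filter (fun i : Fin (2 * k) => (i : ℕ) < k) ∧
      subpop p b a = univ.filter (fun i : Fin (2 * k) => ¬ (i : ℕ) < k) := fun b hba =>
    let ⟨h₁, h₂⟩ := lt_of_reverse_of_top hrev ha hba
    ⟨subpop_eq_filter_of_ite hp h₁ h₂, subpop_eq_filter_not_of_ite hp h₁ h₂⟩
  apply alphaDiv_eq_one_of_forall hm hcard
  · intro b hba
    have hk' : (k : ℝ) ≠ 0 := Nat.cast_ne_zero.mpr (by omega)
    rw [(hsplit b hba).1, (hsplit b hba).2, card_filter_val_lt_two_mul,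
      card_filter_not_val_lt_two_mul, Fintype.card_fin]
    field_simp
    push_cast
    ring
  · intro b hba
    rw [(hsplit b hba).1, (hsplit b hba).2,
      restr_eq_replicate fun i hi => (hp i).trans (if_pos (mem_filter.mp hi).2),
      restr_eq_replicate fun i hi => (hp i).trans (if_neg (mem_filter.mp hi).2),
      card_filter_val_lt_two_mul, card_filter_not_val_lt_two_mul,
      bordaM_replicate (by omega), bordaM_replicate (by omega), ha, hr2a,
      Nat.cast_pred (by omega)]
    simp [hm']

/-- in a fully polarised profile with an even number `n = 2k` of agents
(half with ranking `r1`, half with its reverse `r2`), the issue `a` top-ranked in `r1`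
has α-divisiveness `1` under the normalised Borda score with `ℓ = 4`. -/
theorem stmt4 {I : Type*} [Fintype I] [DecidableEq I] {m k : ℕ}
    (hm : 2 ≤ m) (hcard : Fintype.card I = m) (hk : 1 ≤ k)
    (r1 r2 : I ≃ Fin m)
    (hrev : ∀ x : I, (r2 x : ℕ) = m - 1 - (r1 x : ℕ))
    (p : Fin (2 * k) → I ≃ Fin m)
    (hp : ∀ i : Fin (2 * k), p i = if (i : ℕ) < k then r1 else r2)
    (a : I) (ha : (r1 a : ℕ) = 0)
    (α : ℝ) (hα0 : 0 ≤ α) (hα1 : α ≤ 1) :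
    alphaDiv p bordaM α 4 a = 1 :=
  stmt4_general hm hcard hk r1 r2 hrev p hp a ha α
end

section
/- In a uniform profile P over m ≥ 2 issues (each of the m! rankings appearing exactly once) with ℓ = 4, for every issue a and every α, Div_α^Cop(a, P) = 1: in the subpopulation preferring a to b, a wins every pairwise majority contest, and in the subpopulation preferring b to a, a loses every pairwise majority contest. -/
open Finset

/-!
Relabelling issues, `r ↦ (Equiv.swap x y).trans r`, permutes the uniform profile, so each of the
two relative orders of a pair of issues occurs in exactly half of the `N = m!` rankings and each
of the six relative orders of a triple in exactly a sixth. Among the rankings with `a` above `b`,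
a third issue `c` is below `a` in `N/2 - N/6 = N/3` of them and above it (`c ≻ a ≻ b`) in only
`N/6`, so `a` wins every contest there; with `b` above `a` the two counts are exchanged. Hence the
two Copeland scores are `1` and `0`, every pair splits the profile `N/2 : N/2`, so the weight
`4 · (N/2)² / N²` is `1`, and the divisiveness is `1` for every `α`.
-/

section RankingCounts

variable {I : Type*} [Fintype I] [DecidableEq I] {m : ℕ}

theorem card_filter_swap_trans (x y : I) (P : (I ≃ Fin m) → Prop) [DecidablePred P] :
    #{r | P ((Equiv.swap x y).trans r)} = #{r | P r} :=
  card_equiv ((Equiv.swap x y).equivCongr (Equiv.refl _)) (by simp [Equiv.equivCongr])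

theorem card_filter_lt_comm (a b : I) :
    #{r : I ≃ Fin m | r a < r b} = #{r : I ≃ Fin m | r b < r a} := by
  simpa using card_filter_swap_trans a b fun r : I ≃ Fin m => r b < r a

theorem card_filter_eq_card_filter_and_lt_add (P : (I ≃ Fin m) → Prop) [DecidablePred P]
    {z w : I} (hzw : z ≠ w) :
    #{r | P r} = #{r | P r ∧ r z < r w} + #{r | P r ∧ r w < r z} := by
  rw [← card_filter_add_card_filter_not (s := {r | P r}) fun r => r z < r w,
    filter_filter, filter_filter]
  congr 2
  ext r
  simp [(r.injective.ne hzw.symm).le_iff_lt]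

theorem two_mul_card_filter_lt {a b : I} (hab : a ≠ b) :
    2 * #{r : I ≃ Fin m | r a < r b} = Fintype.card (I ≃ Fin m) := by
  have h := card_filter_eq_card_filter_and_lt_add (fun _ : I ≃ Fin m => True) hab
  simp only [true_and, filter_true, card_univ] at h
  rw [h, ← card_filter_lt_comm]
  ring

theorem card_filter_lt_lt_swap_left {a b c : I} (hca : c ≠ a) (hcb : c ≠ b) :
    #{r : I ≃ Fin m | r b < r a ∧ r a < r c} = #{r : I ≃ Fin m | r a < r b ∧ r b < r c} := by
  simpa [Equiv.swap_apply_of_ne_of_ne hca hcb] using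
    card_filter_swap_trans a b fun r : I ≃ Fin m => r a < r b ∧ r b < r c

theorem card_filter_lt_lt_swap_right {a b c : I} (hab : a ≠ b) (hac : a ≠ c) :
    #{r : I ≃ Fin m | r a < r c ∧ r c < r b} = #{r : I ≃ Fin m | r a < r b ∧ r b < r c} := by
  simpa [Equiv.swap_apply_of_ne_of_ne hab hac] using
    card_filter_swap_trans b c fun r : I ≃ Fin m => r a < r b ∧ r b < r c

theorem three_mul_card_filter_lt_lt {a b c : I} (hab : a ≠ b) (hac : a ≠ c) (hbc : b ≠ c) :
    3 * #{r : I ≃ Fin m | r a < r b ∧ r b < r c} = #{r : I ≃ Fin m | r a < r c} := by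
  have hsplit : #{r : I ≃ Fin m | r a < r c} = #{r : I ≃ Fin m | r b < r a ∧ r a < r c}
      + #{r : I ≃ Fin m | r a < r b ∧ r b < r c} + #{r : I ≃ Fin m | r a < r c ∧ r c < r b} := by
    rw [card_filter_eq_card_filter_and_lt_add (fun r : I ≃ Fin m => r a < r c) hab.symm,
      card_filter_eq_card_filter_and_lt_add (fun r : I ≃ Fin m => r a < r c ∧ r a < r b) hbc,
      ← add_assoc]
    congr 3 <;> ext r <;> grind
  rw [hsplit, card_filter_lt_lt_swap_left hac.symm hbc.symm, card_filter_lt_lt_swap_right hab hac]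
  ring

theorem six_mul_card_filter_lt_lt {a b c : I} (hab : a ≠ b) (hac : a ≠ c) (hbc : b ≠ c) :
    6 * #{r : I ≃ Fin m | r a < r b ∧ r b < r c} = Fintype.card (I ≃ Fin m) := by
  rw [← two_mul_card_filter_lt hac, ← three_mul_card_filter_lt_lt hab hac hbc]
  ring

theorem card_filter_lt_and_gt_lt_card_filter_lt_and_lt [Nonempty (I ≃ Fin m)] {a b c : I}
    (hab : a ≠ b) (hca : c ≠ a) :
    #{r : I ≃ Fin m | r a < r b ∧ r c < r a} < #{r : I ≃ Fin m | r a < r b ∧ r a < r c} := by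
  have hN := Fintype.card_pos (α := I ≃ Fin m)
  have hhalf := two_mul_card_filter_lt (m := m) hab
  obtain rfl | hcb := eq_or_ne c b
  · simp only [and_self]
    rw [filter_false_of_mem fun r _ h => h.1.asymm h.2, card_empty]
    omega
  · have hsixth : 6 * #{r : I ≃ Fin m | r a < r b ∧ r c < r a} = Fintype.card (I ≃ Fin m) := by
      rw [← six_mul_card_filter_lt_lt hca hcb hab]
      congr 2; ext r; simp only [mem_filter, mem_univ, true_and, and_comm]
    have := card_filter_eq_card_filter_and_lt_add (fun r : I ≃ Fin m => r a < r b) hca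
    omega

theorem card_filter_lt_and_lt_le_card_filter_lt_and_gt {a b c : I} (hab : a ≠ b) (hca : c ≠ a) :
    #{r : I ≃ Fin m | r b < r a ∧ r a < r c} ≤ #{r : I ≃ Fin m | r b < r a ∧ r c < r a} := by
  obtain rfl | hcb := eq_or_ne c b
  · rw [filter_false_of_mem fun r _ h => h.1.asymm h.2]
    simp
  · have hsixth := six_mul_card_filter_lt_lt (m := m) hab.symm hcb.symm hca.symm
    have hhalf := two_mul_card_filter_lt (m := m) hab.symm
    have := card_filter_eq_card_filter_and_lt_add (fun r : I ≃ Fin m => r b < r a) hca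
    omega

end RankingCounts

section Copeland

variable {I : Type*} [Fintype I] [DecidableEq I] {m : ℕ}

theorem copM_eq_one_of_forall_wins (hcard : Fintype.card I = m) (hm : 1 < m)
    {Q : Multiset (I ≃ Fin m)} {a : I}
    (h : ∀ c ≠ a, Q.countP (fun r => r c < r a) < Q.countP (fun r => r a < r c)) :
    copM Q a = 1 := by
  have hfilter : ({c | c ≠ a ∧ Q.countP (fun r => r c < r a) < Q.countP (fun r => r a < r c)} :
      Finset I) = univ.erase a := by
    ext c
    simpa using h c
  have hm1 : (m : ℝ) - 1 ≠ 0 := sub_ne_zero.mpr (by exact_mod_cast hm.ne')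
  rw [copM, hfilter, card_erase_of_mem (mem_univ a), card_univ, hcard,
    Nat.cast_pred (by omega), div_self hm1]

theorem copM_eq_zero_of_forall_not_wins {Q : Multiset (I ≃ Fin m)} {a : I}
    (h : ∀ c ≠ a, Q.countP (fun r => r a < r c) ≤ Q.countP (fun r => r c < r a)) :
    copM Q a = 0 := by
  rw [copM, filter_false_of_mem fun c _ hc => (h c hc.1).not_gt hc.2]
  simp

theorem countP_restr_subpop_id (a b : I) (P : (I ≃ Fin m) → Prop) [DecidablePred P] :
    (restr (fun r : I ≃ Fin m => r) (subpop (fun r : I ≃ Fin m => r) a b)).countP P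
      = #{r : I ≃ Fin m | r a < r b ∧ P r} := by
  rw [restr, Multiset.map_id', Multiset.countP_eq_card_filter, subpop, ← filter_val,
    filter_filter]
  rfl

theorem copM_subpop_id_eq_one (hcard : Fintype.card I = m) (hm : 1 < m) {a b : I}
    (hab : a ≠ b) :
    copM (restr (fun r : I ≃ Fin m => r) (subpop (fun r : I ≃ Fin m => r) a b)) a = 1 := by
  have : Nonempty (I ≃ Fin m) := ⟨Fintype.equivFinOfCardEq hcard⟩
  refine copM_eq_one_of_forall_wins hcard hm fun c hca => ?_
  simp only [countP_restr_subpop_id]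
  exact card_filter_lt_and_gt_lt_card_filter_lt_and_lt hab hca

theorem copM_subpop_id_swap_eq_zero {a b : I} (hab : a ≠ b) :
    copM (restr (fun r : I ≃ Fin m => r) (subpop (fun r : I ≃ Fin m => r) b a)) a = 0 := by
  refine copM_eq_zero_of_forall_not_wins fun c hca => ?_
  simp only [countP_restr_subpop_id]
  exact card_filter_lt_and_lt_le_card_filter_lt_and_gt hab hca

end Copeland

theorem alphaDiv_four_eq_one {I A : Type*} [Fintype I] [DecidableEq I] [Fintype A] [Nonempty A]
    {m : ℕ} (hcard : Fintype.card I = m) (hm : 1 < m) (p : A → I ≃ Fin m)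
    (s : Multiset (I ≃ Fin m) → I → ℝ) (α : ℝ) (a : I)
    (hbalanced : ∀ x y : I, x ≠ y → 2 * #(subpop p x y) = Fintype.card A)
    (hseparated : ∀ b ≠ a, |s (restr p (subpop p a b)) a - s (restr p (subpop p b a)) a| = 1) :
    alphaDiv p s α 4 a = 1 := by
  have hA := Fintype.card_pos (α := A)
  have hterm : ∀ b ∈ univ.erase a,
      (if 0 < #(subpop p a b) ∧ 0 < #(subpop p b a) then
        (4 * (#(subpop p a b) : ℝ) * #(subpop p b a) / (Fintype.card A : ℝ) ^ 2) ^ α *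
          |s (restr p (subpop p a b)) a - s (restr p (subpop p b a)) a|
      else 0) = 1 := by
    intro b hb
    have hba := ne_of_mem_erase hb
    have hab_real : 2 * (#(subpop p a b) : ℝ) = Fintype.card A := by exact_mod_cast hbalanced a b hba.symm
    have hba_real : 2 * (#(subpop p b a) : ℝ) = Fintype.card A := by exact_mod_cast hbalanced b a hba
    have hbase : 4 * (#(subpop p a b) : ℝ) * #(subpop p b a) / (Fintype.card A : ℝ) ^ 2 = 1 := by
      rw [div_eq_one_iff_eq (by positivity)]
      linear_combination (2 * (#(subpop p b a) : ℝ)) * hab_real + (Fintype.card A : ℝ) * hba_real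
    rw [if_pos ⟨by grind, by grind⟩, hbase, Real.one_rpow, one_mul, hseparated b hba]
  have hm1 : (m : ℝ) - 1 ≠ 0 := sub_ne_zero.mpr (by exact_mod_cast hm.ne')
  rw [alphaDiv, sum_congr rfl hterm, sum_const, card_erase_of_mem (mem_univ a), card_univ, hcard,
    nsmul_eq_mul, mul_one, Nat.cast_pred (by omega), one_div, inv_mul_cancel₀ hm1]

theorem stmt8_general {I : Type*} [Fintype I] [DecidableEq I] {m : ℕ}
    (hm : 2 ≤ m) (hcard : Fintype.card I = m)
    (α : ℝ) (a : I) :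
    (∀ b : I, b ≠ a →
      copM (restr (fun r : I ≃ Fin m => r) (subpop (fun r : I ≃ Fin m => r) a b)) a = 1 ∧
      copM (restr (fun r : I ≃ Fin m => r) (subpop (fun r : I ≃ Fin m => r) b a)) a = 0) ∧
    alphaDiv (fun r : I ≃ Fin m => r) copM α 4 a = 1 := by
  have : Nonempty (I ≃ Fin m) := ⟨Fintype.equivFinOfCardEq hcard⟩
  have hcop : ∀ b, b ≠ a →
      copM (restr (fun r : I ≃ Fin m => r) (subpop (fun r : I ≃ Fin m => r) a b)) a = 1 ∧
      copM (restr (fun r : I ≃ Fin m => r) (subpop (fun r : I ≃ Fin m => r) b a)) a = 0 :=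
    fun b hb => ⟨copM_subpop_id_eq_one hcard hm hb.symm, copM_subpop_id_swap_eq_zero hb.symm⟩
  refine ⟨hcop, alphaDiv_four_eq_one hcard hm _ _ α a (fun x y hxy => two_mul_card_filter_lt hxy)
    fun b hb => ?_⟩
  rw [(hcop b hb).1, (hcop b hb).2]
  norm_num

/-- in the uniform profile consisting of each of the `m!` rankings exactly
once, in the sub-population preferring `a` to `b` issue `a` has Copeland score `1` (it
wins every majority contest) and in the one preferring `b` to `a` it has Copeland score
`0`; hence every issue has α-divisiveness `1` under the normalised Copeland score, `ℓ = 4`. -/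
theorem stmt8 {I : Type*} [Fintype I] [DecidableEq I] {m : ℕ}
    (hm : 2 ≤ m) (hcard : Fintype.card I = m)
    (α : ℝ) (hα0 : 0 ≤ α) (hα1 : α ≤ 1) (a : I) :
    (∀ b : I, b ≠ a →
      copM (restr (fun r : I ≃ Fin m => r) (subpop (fun r : I ≃ Fin m => r) a b)) a = 1 ∧
      copM (restr (fun r : I ≃ Fin m => r) (subpop (fun r : I ≃ Fin m => r) b a)) a = 0) ∧
    alphaDiv (fun r : I ≃ Fin m => r) copM α 4 a = 1 :=
  stmt8_general hm hcard α a
end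

section
/- For a fixed issue a, among all subsets X of agents, the maximum of |Borda(a, P_X) − Borda(a, P_{N\X})| is attained by a 'prefix' set: if agents are ordered so that the rank of a is non-increasing (i.e., r(a, ≻_i) ≥ r(a, ≻_{i+1})), then some X_k = {1,...,k} with 1 ≤ k ≤ n−1 achieves the maximum. -/
open Finset

/-- Divisiveness of issue `a` with respect to a sub-population `X` (Borda scoring). -/
noncomputable def divX {I : Type*} {n m : ℕ}
    (p : Fin n → I ≃ Fin m) (a : I) (X : Finset (Fin n)) : ℝ :=
  |bordaM (restr p X) a - bordaM (restr p Xᶜ) a|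

/-! Replacing `X` by the prefix of the same size can only lower the sum of the (monotone) Borda
points inside it and raise the sum outside, so the outside average minus the inside average
only grows. Applied to whichever of `X`, `Xᶜ` has the smaller average, this covers both signs
of the difference inside `divX`. -/

open scoped BigOperators

theorem Finset.sum_le_sum_of_forall_le_of_card_eq {ι α : Type*} [AddCommMonoid α] [LinearOrder α]
    [IsOrderedAddMonoid α] {s t : Finset ι} {g : ι → α} (hst : ∀ i ∈ s, ∀ j ∈ t, g i ≤ g j)
    (hcard : #s = #t) : ∑ i ∈ s, g i ≤ ∑ j ∈ t, g j := by
  rcases t.eq_empty_or_nonempty with rfl | ht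
  · simp [card_eq_zero.mp hcard]
  obtain ⟨j₀, hj₀, hmin⟩ := t.exists_min_image g ht
  calc ∑ i ∈ s, g i ≤ #s • g j₀ := s.sum_le_card_nsmul g _ fun i hi => hst i hi j₀ hj₀
    _ = #t • g j₀ := by rw [hcard]
    _ ≤ ∑ j ∈ t, g j := t.card_nsmul_le_sum g _ hmin

theorem Finset.sum_le_sum_of_isLowerSet {ι α : Type*} [LinearOrder ι] [DecidableEq ι]
    [AddCommMonoid α] [LinearOrder α] [IsOrderedAddMonoid α] {f : ι → α} (hf : Monotone f)
    {s t : Finset ι} (ht : IsLowerSet (t : Set ι)) (hcard : #t = #s) :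
    ∑ i ∈ t, f i ≤ ∑ i ∈ s, f i := by
  have hsdiff : ∑ i ∈ t \ s, f i ≤ ∑ i ∈ s \ t, f i := by
    refine sum_le_sum_of_forall_le_of_card_eq (fun i hi j hj => hf ?_) (card_sdiff_comm hcard)
    by_contra! hji
    exact (mem_sdiff.mp hj).2 (ht hji.le (mem_sdiff.mp hi).1)
  rw [← sum_inter_add_sum_sdiff t s, ← sum_inter_add_sum_sdiff s t, inter_comm]
  exact add_le_add_right hsdiff _

theorem Finset.expect_compl_sub_expect_le_of_isLowerSet {ι : Type*} [Fintype ι] [LinearOrder ι]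
    [DecidableEq ι] {f : ι → ℝ} (hf : Monotone f) {s t : Finset ι} (ht : IsLowerSet (t : Set ι))
    (hcard : #t = #s) :
    𝔼 i ∈ sᶜ, f i - 𝔼 i ∈ s, f i ≤ 𝔼 i ∈ tᶜ, f i - 𝔼 i ∈ t, f i := by
  have hin : ∑ i ∈ t, f i ≤ ∑ i ∈ s, f i := sum_le_sum_of_isLowerSet hf ht hcard
  have hout : ∑ i ∈ sᶜ, f i ≤ ∑ i ∈ tᶜ, f i := by
    linarith [sum_add_sum_compl s f, sum_add_sum_compl t f]
  simp only [expect_eq_sum_div_card, card_compl, hcard]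
  gcongr

-- The paper's `{1, …, k}`: agents are indexed from `0`.
def prefixSet (n k : ℕ) : Finset (Fin n) :=
  univ.filter fun i : Fin n => (i : ℕ) < k

theorem card_prefixSet {n k : ℕ} (hk : k ≤ n) : #(prefixSet n k) = k := by
  rw [prefixSet, Fin.card_filter_val_lt, min_eq_right hk]

theorem isLowerSet_prefixSet (n k : ℕ) : IsLowerSet (prefixSet n k : Set (Fin n)) :=
  fun i j hji hj => by simp_all [prefixSet]; omega

theorem exists_prefixSet_abs_expect_sub_le {n : ℕ} {f : Fin n → ℝ} (hf : Monotone f)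
    {X : Finset (Fin n)} (hX : X.Nonempty) (hX' : X ≠ univ) :
    ∃ k, 1 ≤ k ∧ k ≤ n - 1 ∧
      |𝔼 i ∈ X, f i - 𝔼 i ∈ Xᶜ, f i| ≤
        |𝔼 i ∈ prefixSet n k, f i - 𝔼 i ∈ (prefixSet n k)ᶜ, f i| := by
  have hgap : ∀ Y : Finset (Fin n), Y.Nonempty → Y ≠ univ →
      1 ≤ #Y ∧ #Y ≤ n - 1 ∧ 𝔼 i ∈ Yᶜ, f i - 𝔼 i ∈ Y, f i ≤
        |𝔼 i ∈ prefixSet n #Y, f i - 𝔼 i ∈ (prefixSet n #Y)ᶜ, f i| := by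
    intro Y hY hY'
    have hlt : #Y < n := by simpa using card_lt_card (ssubset_univ_iff.mpr hY')
    refine ⟨hY.card_pos, by omega, ?_⟩
    rw [abs_sub_comm]
    exact (expect_compl_sub_expect_le_of_isLowerSet hf (isLowerSet_prefixSet n #Y)
      (card_prefixSet hlt.le)).trans (le_abs_self _)
  rcases le_total (𝔼 i ∈ X, f i) (𝔼 i ∈ Xᶜ, f i) with hle | hle
  · obtain ⟨h1, h2, h⟩ := hgap X hX hX'
    exact ⟨#X, h1, h2, by rwa [abs_of_nonpos (sub_nonpos.mpr hle), neg_sub]⟩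
  · obtain ⟨h1, h2, h⟩ :=
      hgap Xᶜ (nonempty_iff_ne_empty.mpr (by simpa using hX')) (by simpa using hX.ne_empty)
    rw [compl_compl] at h
    exact ⟨#Xᶜ, h1, h2, by rwa [abs_of_nonneg (sub_nonneg.mpr hle)]⟩

theorem divX_eq_abs_expect_sub_div {I : Type*} {n m : ℕ} (p : Fin n → I ≃ Fin m) (a : I)
    (X : Finset (Fin n)) :
    divX p a X = |𝔼 i ∈ X, ((m : ℝ) - 1 - (p i a : ℕ)) - 𝔼 i ∈ Xᶜ, ((m : ℝ) - 1 - (p i a : ℕ))| /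
      |(m : ℝ) - 1| := by
  have hborda : ∀ Y : Finset (Fin n), bordaM (restr p Y) a =
      (𝔼 i ∈ Y, ((m : ℝ) - 1 - (p i a : ℕ))) / ((m : ℝ) - 1) := by
    intro Y
    simp only [bordaM, restr, Multiset.map_map, Multiset.card_map, expect_eq_sum_div_card,
      div_div]
    rfl
  rw [divX, hborda, hborda, ← sub_div, abs_div]

theorem stmt10_general {I : Type*} {n m : ℕ}
    (p : Fin n → I ≃ Fin m) (a : I)
    (hsorted : ∀ i j : Fin n, i ≤ j → (p j a : ℕ) ≤ (p i a : ℕ))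
    (X : Finset (Fin n)) (hX : X.Nonempty) (hX' : X ≠ Finset.univ) :
    ∃ k : ℕ, 1 ≤ k ∧ k ≤ n - 1 ∧
      divX p a X ≤ divX p a (Finset.univ.filter fun i : Fin n => (i : ℕ) < k) := by
  have hmono : Monotone fun i : Fin n => (m : ℝ) - 1 - (p i a : ℕ) :=
    fun i j hij => by dsimp only; gcongr; exact hsorted i j hij
  obtain ⟨k, hk1, hkn, hk⟩ := exists_prefixSet_abs_expect_sub_le hmono hX hX'
  refine ⟨k, hk1, hkn, ?_⟩
  rw [divX_eq_abs_expect_sub_div, divX_eq_abs_expect_sub_div]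
  exact div_le_div_of_nonneg_right hk (abs_nonneg _)

/-- with agents ordered by non-increasing rank of `a`, the maximum of the
Borda divisiveness over nonempty proper sub-populations is attained by a prefix
`{1, …, k}` for some `1 ≤ k ≤ n - 1`. -/
theorem stmt10 {I : Type*} {n m : ℕ} (hm : 2 ≤ m) (hn : 2 ≤ n)
    (p : Fin n → I ≃ Fin m) (a : I)
    (hsorted : ∀ i j : Fin n, i ≤ j → (p j a : ℕ) ≤ (p i a : ℕ))
    (X : Finset (Fin n)) (hX : X.Nonempty) (hX' : X ≠ Finset.univ) :
    ∃ k : ℕ, 1 ≤ k ∧ k ≤ n - 1 ∧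
      divX p a X ≤ divX p a (Finset.univ.filter fun i : Fin n => (i : ℕ) < k) :=
  stmt10_general p a hsorted X hX hX'
end

section
/- Swap monotonicity for Borda divisiveness: with agents ordered by non-increasing rank of issue a, if X ⊆ N contains agent i but not agent i−z (for some 1 ≤ z ≤ i−1), then replacing i by i−z does not decrease the divisiveness: Div(X') ≥ Div(X) where X' = (X \ {i}) ∪ {i−z}, provided Borda(a, P_X) ≥ Borda(a, P_{N\X}). -/
open Finset

namespace Finset

variable {α : Type*} [DecidableEq α]

theorem card_insert_erase_of_mem_of_notMem {s : Finset α} {i j : α} (hi : i ∈ s) (hj : j ∉ s) :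
    #(insert j (s.erase i)) = #s := by
  rw [card_insert_of_notMem fun h => hj (mem_of_mem_erase h), card_erase_add_one hi]

theorem sum_insert_erase_of_mem_of_notMem {M : Type*} [AddCommGroup M] {s : Finset α} {i j : α}
    (hi : i ∈ s) (hj : j ∉ s) (f : α → M) :
    ∑ x ∈ insert j (s.erase i), f x = ∑ x ∈ s, f x - f i + f j := by
  rw [sum_insert fun h => hj (mem_of_mem_erase h), sum_erase_eq_sub hi, add_comm]

theorem compl_insert_erase_of_ne [Fintype α] {s : Finset α} {i j : α} (hij : i ≠ j) :
    (insert j (s.erase i))ᶜ = insert i (sᶜ.erase j) := by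
  rw [compl_insert, compl_erase, erase_insert_of_ne hij]

end Finset

section Borda

variable {I A : Type*} {m : ℕ} (p : A → I ≃ Fin m) (a : I)

theorem bordaM_restr (S : Finset A) :
    bordaM (restr p S) a = (∑ x ∈ S, ((m : ℝ) - 1 - (p x a : ℕ))) / (#S * ((m : ℝ) - 1)) := by
  simp only [bordaM, restr, Multiset.map_map, Multiset.card_map, Function.comp_def]
  rfl

variable [DecidableEq A] {S : Finset A} {i j : A}

theorem bordaM_restr_insert_erase (hi : i ∈ S) (hj : j ∉ S) :
    bordaM (restr p (insert j (S.erase i))) a =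
      bordaM (restr p S) a + (((p i a : ℕ) : ℝ) - (p j a : ℕ)) / (#S * ((m : ℝ) - 1)) := by
  rw [bordaM_restr, bordaM_restr, card_insert_erase_of_mem_of_notMem hi hj,
    sum_insert_erase_of_mem_of_notMem hi hj, ← add_div]
  ring_nf

theorem bordaM_restr_insert_erase_le (hi : i ∈ S) (hj : j ∉ S) (h : (p i a : ℕ) ≤ p j a) :
    bordaM (restr p (insert j (S.erase i))) a ≤ bordaM (restr p S) a := by
  have hm : (1 : ℝ) ≤ m := by exact_mod_cast (p i a).pos
  have h' : ((p i a : ℕ) : ℝ) ≤ (p j a : ℕ) := by exact_mod_cast h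
  rw [bordaM_restr_insert_erase p a hi hj]
  exact add_le_of_nonpos_right (div_nonpos_of_nonpos_of_nonneg (by linarith) (by positivity))

theorem le_bordaM_restr_insert_erase (hi : i ∈ S) (hj : j ∉ S) (h : (p j a : ℕ) ≤ p i a) :
    bordaM (restr p S) a ≤ bordaM (restr p (insert j (S.erase i))) a := by
  have hm : (1 : ℝ) ≤ m := by exact_mod_cast (p i a).pos
  have h' : ((p j a : ℕ) : ℝ) ≤ (p i a : ℕ) := by exact_mod_cast h
  rw [bordaM_restr_insert_erase p a hi hj]
  exact le_add_of_nonneg_right (div_nonneg (by linarith) (by positivity))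

end Borda

theorem divX_le_divX {I : Type*} {n m : ℕ} {p : Fin n → I ≃ Fin m} {a : I} {X Y : Finset (Fin n)}
    (hX : bordaM (restr p X) a ≤ bordaM (restr p Xᶜ) a)
    (hYX : bordaM (restr p Y) a ≤ bordaM (restr p X) a)
    (hXY : bordaM (restr p Xᶜ) a ≤ bordaM (restr p Yᶜ) a) :
    divX p a X ≤ divX p a Y := by
  unfold divX
  rw [abs_sub_comm, abs_of_nonneg (by linarith), abs_sub_comm, abs_of_nonneg (by linarith)]
  linarith

theorem stmt11_general {I : Type*} {n m : ℕ}
    (p : Fin n → I ≃ Fin m) (a : I)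
    (hsorted : ∀ i j : Fin n, i ≤ j → (p j a : ℕ) ≤ (p i a : ℕ))
    (X : Finset (Fin n)) (i j : Fin n) (hji : j < i)
    (hi : i ∈ X) (hj : j ∉ X)
    (hle : bordaM (restr p X) a ≤ bordaM (restr p Xᶜ) a) :
    bordaM (restr p (insert j (X.erase i))) a ≤ bordaM (restr p X) a ∧
    bordaM (restr p Xᶜ) a ≤ bordaM (restr p (insert j (X.erase i))ᶜ) a ∧
    divX p a X ≤ divX p a (insert j (X.erase i)) := by
  have hrank := hsorted j i hji.le
  have hX := bordaM_restr_insert_erase_le p a hi hj hrank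
  have hXc : bordaM (restr p Xᶜ) a ≤ bordaM (restr p (insert j (X.erase i))ᶜ) a := by
    rw [compl_insert_erase_of_ne hji.ne']
    exact le_bordaM_restr_insert_erase p a (mem_compl.2 hj) (by simpa using hi) hrank
  exact ⟨hX, hXc, divX_le_divX hle hX hXc⟩

/-- swap monotonicity. With agents ordered by non-increasing rank of `a`,
if `X` is the side with the weakly smaller Borda score of `a`, contains `i` but not an
earlier agent `j < i`, then exchanging `i` for `j` weakly decreases the Borda score of
`X`, weakly increases that of the complement, and weakly increases the divisiveness. -/
theorem stmt11 {I : Type*} {n m : ℕ} (hm : 2 ≤ m)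
    (p : Fin n → I ≃ Fin m) (a : I)
    (hsorted : ∀ i j : Fin n, i ≤ j → (p j a : ℕ) ≤ (p i a : ℕ))
    (X : Finset (Fin n)) (i j : Fin n) (hji : j < i)
    (hi : i ∈ X) (hj : j ∉ X)
    (hle : bordaM (restr p X) a ≤ bordaM (restr p Xᶜ) a) :
    bordaM (restr p (insert j (X.erase i))) a ≤ bordaM (restr p X) a ∧
    bordaM (restr p Xᶜ) a ≤ bordaM (restr p (insert j (X.erase i))ᶜ) a ∧
    divX p a X ≤ divX p a (insert j (X.erase i)) :=
  stmt11_general p a hsorted X i j hji hi hj hle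
end

section
/- Under injection of k copies each of ≻_odd and ≻_even into a profile P of n agents, no issue b ≠ a can have divisiveness tending to 1: for every b ≠ a, the rank of b differs by at most 1 between ≻_odd and ≻_even, and consequently limsup_{k→∞} Div_0^Borda(b, P'_k) ≤ 1/(m−1) + o(1) contribution from original agents, in particular lim_{k→∞} Div_0^Borda(b, P'_k) < 1 whenever m ≥ 3. -/
/-!
Since `a` is first in `rodd`, last in `reven`, and the other issues keep their relative order,
the rank of `b` in `rodd` is its rank in `reven` plus one. As `k → ∞`, the sub-population
preferring `b` to `a` is dominated by the copies of `reven` and the one preferring `a` to `b` by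
the copies of `rodd`, so the summand of `c = a` in the divisiveness of `b` tends to the Borda
difference `1 / (m - 1)` of `b` between the two rankings, with an error `O(n / k)`. Every other
summand is at most `1`, so eventually the divisiveness is below
`(m - 2 + 1 / (m - 1) + 1 / 4) / (m - 1) < 1`.
-/

open Finset

/-- The profile obtained from `p` by injecting `k` fresh agents with ranking `rodd`
and `k` fresh agents with ranking `reven`. -/
def inj {I : Type*} {n m : ℕ} (p : Fin n → I ≃ Fin m)
    (rodd reven : I ≃ Fin m) (k : ℕ) :
    (Fin n ⊕ (Fin k ⊕ Fin k)) → I ≃ Fin m :=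
  Sum.elim p (Sum.elim (fun _ => rodd) (fun _ => reven))

section Rank

variable {I : Type*} [Fintype I] {m : ℕ}

theorem card_filter_apply_lt (r : I ≃ Fin m) (b : I) : #{c | r c < r b} = r b := by
  rw [← Fin.card_Iio (r b), ← card_map r.toEmbedding]
  congr 1
  ext j
  simp [Equiv.toEmbedding]

theorem val_apply_eq_val_apply_add_one [DecidableEq I] {r s : I ≃ Fin m} {a b : I}
    (hr : r a < r b) (hs : s b < s a) (hrs : ∀ x, x ≠ a → (r x < r b ↔ s x < s b)) :
    (r b : ℕ) = s b + 1 := by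
  have hfilter : univ.filter (fun c => r c < r b) = insert a (univ.filter fun c => s c < s b) := by
    ext c
    by_cases hc : c = a
    · subst hc; simp [hr]
    · simp [hc, hrs c hc]
  have ha : a ∉ univ.filter fun c => s c < s b := by simp [hs.not_gt]
  rw [← card_filter_apply_lt, ← card_filter_apply_lt, hfilter, card_insert_of_notMem ha]

end Rank

-- `(S + k * v) / ((t + k) * M)` is the normalised Borda score of `t` agents of total score `S`
-- joined by `k` agents of score `v`.
theorem abs_add_mul_div_sub_div_le {t k M S v : ℝ} (hk : 0 < k) (hM : 0 < M) (hS0 : 0 ≤ S)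
    (hS1 : S ≤ t * M) (hv0 : 0 ≤ v) (hv1 : v ≤ M) :
    |(S + k * v) / ((t + k) * M) - v / M| ≤ t / k := by
  have ht : 0 ≤ t := nonneg_of_mul_nonneg_left (hS0.trans hS1) hM
  have hden : 0 < (t + k) * M := by positivity
  have heq : (S + k * v) / ((t + k) * M) - v / M = (S - t * v) / ((t + k) * M) := by
    field_simp; ring
  have habs : |S - t * v| ≤ t * M := abs_le.2 ⟨by nlinarith, by nlinarith⟩
  rw [heq, abs_div, abs_of_pos hden, div_le_div_iff₀ hden hk]
  nlinarith [mul_le_mul_of_nonneg_right habs hk.le]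

section Borda

variable {I : Type*} {m : ℕ}

theorem bordaM_numerator_nonneg (Q : Multiset (I ≃ Fin m)) (b : I) :
    0 ≤ (Q.map fun r => (m : ℝ) - 1 - (r b : ℕ)).sum :=
  Multiset.sum_nonneg <| Multiset.forall_mem_map_iff.2 fun r _ => by
    linarith [(Nat.cast_le (α := ℝ)).2 (r b).isLt, Nat.cast_succ (R := ℝ) (r b)]

theorem bordaM_numerator_le (Q : Multiset (I ≃ Fin m)) (b : I) :
    (Q.map fun r => (m : ℝ) - 1 - (r b : ℕ)).sum ≤ Multiset.card Q * (m - 1) := by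
  simpa only [Multiset.card_map, nsmul_eq_mul] using
    Multiset.sum_le_card_nsmul (Q.map fun r => (m : ℝ) - 1 - (r b : ℕ)) (m - 1)
      (Multiset.forall_mem_map_iff.2 fun r _ => sub_le_self _ (Nat.cast_nonneg _))

theorem bordaM_mem_Icc (Q : Multiset (I ≃ Fin m)) (b : I) : bordaM Q b ∈ Set.Icc 0 1 := by
  have hden := (bordaM_numerator_nonneg Q b).trans (bordaM_numerator_le Q b)
  exact ⟨div_nonneg (bordaM_numerator_nonneg Q b) hden,
    div_le_one_of_le₀ (bordaM_numerator_le Q b) hden⟩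

theorem abs_bordaM_sub_bordaM_le_one (Q R : Multiset (I ≃ Fin m)) (b : I) :
    |bordaM Q b - bordaM R b| ≤ 1 :=
  abs_sub_le_of_nonneg_of_le (bordaM_mem_Icc Q b).1 (bordaM_mem_Icc Q b).2
    (bordaM_mem_Icc R b).1 (bordaM_mem_Icc R b).2

theorem bordaM_singleton (r : I ≃ Fin m) (b : I) :
    bordaM {r} b = ((m : ℝ) - 1 - (r b : ℕ)) / (m - 1) := by
  simp [bordaM]

theorem abs_bordaM_add_replicate_sub_le (hm : 1 < m) (Q : Multiset (I ≃ Fin m)) (r : I ≃ Fin m)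
    (b : I) {k : ℕ} (hk : 0 < k) :
    |bordaM (Q + Multiset.replicate k r) b - bordaM {r} b| ≤ Multiset.card Q / k := by
  have hM : (0 : ℝ) < m - 1 := by
    have : (1 : ℝ) < m := by exact_mod_cast hm
    linarith
  have hsingle := bordaM_mem_Icc {r} b
  rw [bordaM_singleton] at hsingle ⊢
  rw [Set.mem_Icc, le_div_iff₀ hM, div_le_one hM, zero_mul] at hsingle
  simp only [bordaM, Multiset.map_add, Multiset.sum_add, Multiset.map_replicate,
    Multiset.sum_replicate, nsmul_eq_mul, Multiset.card_add, Multiset.card_replicate, Nat.cast_add]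
  exact abs_add_mul_div_sub_div_le (by exact_mod_cast hk) hM (bordaM_numerator_nonneg Q b)
    (bordaM_numerator_le Q b) hsingle.1 hsingle.2

end Borda

section Injection

variable {I : Type*} {n m : ℕ}

theorem restr_inj_subpop (p : Fin n → I ≃ Fin m) (rodd reven : I ≃ Fin m)
    (k : ℕ) (x y : I) :
    restr (inj p rodd reven k) (subpop (inj p rodd reven k) x y) =
      restr p (subpop p x y) +
        ((if rodd x < rodd y then Multiset.replicate k rodd else 0) +
          if reven x < reven y then Multiset.replicate k reven else 0) := by
  simp only [restr, subpop, filter_val, ← univ_disjSum_univ, val_disjSum, Multiset.disjSum,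
    Multiset.filter_add, Multiset.filter_map, Multiset.map_add, Multiset.map_map]
  congr 1
  by_cases ho : rodd x < rodd y <;> by_cases he : reven x < reven y <;>
    simp [inj, Function.comp_def, ho, he]

theorem card_restr_subpop_le (p : Fin n → I ≃ Fin m) (x y : I) :
    Multiset.card (restr p (subpop p x y)) ≤ n := by
  rw [restr, Multiset.card_map]
  exact (card_filter_le _ _).trans_eq (card_fin n)

theorem bordaM_singleton_sub_bordaM_singleton {r s : I ≃ Fin m} {b : I}
    (hrank : (r b : ℕ) = s b + 1) : bordaM {s} b - bordaM {r} b = 1 / (m - 1) := by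
  rw [bordaM_singleton, bordaM_singleton, div_sub_div_same, hrank]
  push_cast
  ring_nf

theorem abs_bordaM_inj_subpop_sub_le (hm : 1 < m) (p : Fin n → I ≃ Fin m)
    {rodd reven : I ≃ Fin m} {a b : I} (hodd : rodd a < rodd b) (heven : reven b < reven a)
    (hrank : (rodd b : ℕ) = reven b + 1) {k : ℕ} (hk : 0 < k) :
    |bordaM (restr (inj p rodd reven k) (subpop (inj p rodd reven k) b a)) b -
        bordaM (restr (inj p rodd reven k) (subpop (inj p rodd reven k) a b)) b| ≤
      1 / (m - 1) + 2 * n / k := by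
  rw [restr_inj_subpop, restr_inj_subpop, if_neg hodd.not_gt, if_pos heven, if_pos hodd,
    if_neg heven.not_gt, zero_add, add_zero]
  set X := bordaM (restr p (subpop p b a) + Multiset.replicate k reven) b
  set Y := bordaM (restr p (subpop p a b) + Multiset.replicate k rodd) b
  have hX : |X - bordaM {reven} b| ≤ n / k :=
    (abs_bordaM_add_replicate_sub_le hm _ reven b hk).trans <| by
      gcongr; exact_mod_cast card_restr_subpop_le p b a
  have hY : |bordaM {rodd} b - Y| ≤ n / k := by
    rw [abs_sub_comm]
    refine (abs_bordaM_add_replicate_sub_le hm _ rodd b hk).trans ?_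
    gcongr; exact_mod_cast card_restr_subpop_le p a b
  have hmid : |bordaM {reven} b - bordaM {rodd} b| = 1 / (m - 1) := by
    rw [bordaM_singleton_sub_bordaM_singleton hrank, abs_of_nonneg]
    have : (1 : ℝ) < m := by exact_mod_cast hm
    exact one_div_nonneg.2 (by linarith)
  calc |X - Y| ≤ |X - bordaM {reven} b| + (|bordaM {reven} b - bordaM {rodd} b| +
          |bordaM {rodd} b - Y|) :=
        (abs_sub_le _ _ _).trans (add_le_add_right (abs_sub_le _ _ _) _)
    _ ≤ n / k + (1 / (m - 1) + n / k) := by rw [hmid]; gcongr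
    _ = 1 / (m - 1) + 2 * n / k := by ring

end Injection

section AlphaDiv

variable {I A : Type*} [Fintype I] [DecidableEq I] [Fintype A] {m : ℕ}

theorem alphaDiv_nonneg (hm : 1 ≤ m) (p : A → I ≃ Fin m)
    (s : Multiset (I ≃ Fin m) → I → ℝ) (α : ℝ) {ℓ : ℝ} (hℓ : 0 ≤ ℓ) (b : I) :
    0 ≤ alphaDiv p s α ℓ b := by
  have hM : (0 : ℝ) ≤ m - 1 := sub_nonneg.2 (by exact_mod_cast hm)
  refine mul_nonneg (one_div_nonneg.2 hM) (sum_nonneg fun c _ => ?_)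
  split_ifs
  · exact mul_nonneg (Real.rpow_nonneg (by positivity) _) (abs_nonneg _)
  · exact le_rfl

theorem alphaDiv_bordaM_zero_le (hcard : Fintype.card I = m) (p : A → I ≃ Fin m) (ℓ : ℝ)
    {a b : I} (hab : a ≠ b) {ε : ℝ}
    (hε : |bordaM (restr p (subpop p b a)) b - bordaM (restr p (subpop p a b)) b| ≤ ε) :
    alphaDiv p bordaM 0 ℓ b ≤ (m - 2 + ε) / (m - 1) := by
  have hm : 2 ≤ m := hcard ▸ Fintype.one_lt_card_iff.2 ⟨a, b, hab⟩
  have ha : a ∈ univ.erase b := mem_erase.2 ⟨hab, mem_univ a⟩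
  have hrest : #((univ.erase b).erase a) = m - 2 := by
    rw [card_erase_of_mem ha, card_erase_of_mem (mem_univ b), card_univ, hcard]
    omega
  let d : I → ℝ := fun c =>
    |bordaM (restr p (subpop p b c)) b - bordaM (restr p (subpop p c b)) b|
  have hsum : ∑ c ∈ univ.erase b, d c ≤ ε + (m - 2) := by
    rw [← add_sum_erase _ _ ha]
    refine add_le_add hε ((sum_le_card_nsmul _ _ 1 fun c _ =>
      abs_bordaM_sub_bordaM_le_one _ _ b).trans ?_)
    rw [hrest, nsmul_eq_mul, mul_one, Nat.cast_sub hm]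
    norm_num
  rw [alphaDiv, one_div_mul_eq_div]
  refine div_le_div_of_nonneg_right ?_ (sub_nonneg.2 (by exact_mod_cast (by omega : 1 ≤ m)))
  refine (sum_le_sum fun c _ => ?_).trans (hsum.trans_eq (add_comm _ _))
  split_ifs
  · rw [Real.rpow_zero, one_mul]
  · exact abs_nonneg _

end AlphaDiv

/-- under injection of `k` copies each of `rodd` (`a` first) and `reven`
(`a` last, same order of the other issues), for any `b ≠ a` the rank of `b` differs by
at most `1` between `rodd` and `reven`, and the 0-divisiveness of `b` under Borda does
not tend to `1`: its limsup as `k → ∞` is `< 1` (for `m ≥ 3`). -/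
theorem stmt15 {I : Type*} [Fintype I] [DecidableEq I] {m n : ℕ}
    (hm : 3 ≤ m) (hcard : Fintype.card I = m)
    (p : Fin n → I ≃ Fin m) (a : I)
    (base rodd reven : I ≃ Fin m)
    (hodda : (rodd a : ℕ) = 0) (hevena : (reven a : ℕ) = m - 1)
    (hodd : ∀ x y : I, x ≠ a → y ≠ a → (rodd x < rodd y ↔ base x < base y))
    (heven : ∀ x y : I, x ≠ a → y ≠ a → (reven x < reven y ↔ base x < base y))
    (b : I) (hb : b ≠ a) :
    |((rodd b : ℕ) : ℤ) - ((reven b : ℕ) : ℤ)| ≤ 1 ∧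
    Filter.limsup (fun k : ℕ => alphaDiv (inj p rodd reven k) bordaM 0 4 b)
      Filter.atTop < 1 := by
  have hodd_ab : rodd a < rodd b := by
    rw [Fin.lt_def, hodda]
    exact Nat.pos_of_ne_zero fun h => hb (rodd.injective (Fin.ext (h.trans hodda.symm)))
  have heven_ba : reven b < reven a := by
    rw [Fin.lt_def, hevena]
    exact lt_of_le_of_ne (Nat.le_sub_one_of_lt (reven b).isLt)
      fun h => hb (reven.injective (Fin.ext (h.trans hevena.symm)))
  have hrank : (rodd b : ℕ) = reven b + 1 := val_apply_eq_val_apply_add_one hodd_ab heven_ba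
    fun x hx => (hodd x b hx hb).trans (heven x b hx hb).symm
  refine ⟨by rw [hrank]; norm_num, ?_⟩
  have hM : (2 : ℝ) ≤ m - 1 := by
    have : (3 : ℝ) ≤ m := by exact_mod_cast hm
    linarith
  have hbound : ∀ k : ℕ, 8 * n ≤ k → 0 < k →
      alphaDiv (inj p rodd reven k) bordaM 0 4 b ≤ (m - 2 + (1 / (m - 1) + 1 / 4)) / (m - 1) := by
    intro k hnk hk
    refine alphaDiv_bordaM_zero_le hcard _ 4 hb.symm
      ((abs_bordaM_inj_subpop_sub_le (by omega) p hodd_ab heven_ba hrank hk).trans ?_)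
    rw [add_le_add_iff_left, div_le_div_iff₀ (by exact_mod_cast hk) (by norm_num)]
    have : (8 * n : ℝ) ≤ k := by exact_mod_cast hnk
    linarith
  have hcobounded : Filter.IsCoboundedUnder (· ≤ ·) Filter.atTop
      (fun k : ℕ => alphaDiv (inj p rodd reven k) bordaM 0 4 b) :=
    Filter.isCoboundedUnder_le_of_le _ fun k => alphaDiv_nonneg (by omega) _ _ _ (by norm_num) b
  refine (Filter.limsup_le_of_le hcobounded (Filter.eventually_atTop.2
    ⟨8 * n + 1, fun k hk => hbound k (by omega) (by omega)⟩)).trans_lt ?_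
  rw [div_lt_one (by linarith)]
  have : 1 / ((m : ℝ) - 1) ≤ 1 / 2 := one_div_le_one_div_of_le (by norm_num) hM
  linarith
end
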